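/- arXiv:2008.04290 — 2 statements merged into one kernel-verified Lean document; each statement's English description precedes it below -/
import Mathlib

section
/- Let (M_k)_{k∈ℕ} be a martingale with respect to a filtration (𝓕_k)_{k∈ℕ} on a probability space, with M_0 = 0 and |M_k − M_{k−1}| ≤ K almost surely for every k ≥ 1, where K ≥ 0. Then for every n ≥ 1, E[ M_n⁴ ] ≤ 7 K⁴ n². -/
/-!
Write `d = M (k + 1) - M k`, so `|d| ≤ K`. Expanding `(M k + d) ^ 4` and bounding the powers of `d`
gives `M (k + 1) ^ 4 ≤ M k ^ 4 + 4 M k ³ d + 8 K² M k ² + 3 K⁴` pointwise. The cross term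
`M k ³ d` has mean zero because `M k ³` is `ℱ k`-measurable and `d` has zero conditional
expectation, so `E[M (k + 1) ^ 4] ≤ E[M k ^ 4] + 8 K² E[M k ²] + 3 K⁴`. The same argument in
degree two gives `E[M k ²] ≤ K² k`, and induction yields `E[M n ^ 4] ≤ 4 K⁴ n²`.
Integrability is never an issue since `|M k| ≤ K k` almost surely.
-/

open MeasureTheory

lemma add_sq_le_of_abs_le {a d K : ℝ} (hd : |d| ≤ K) :
    (a + d) ^ 2 ≤ a ^ 2 + 2 * a * d + K ^ 2 := by
  nlinarith [abs_nonneg d, sq_abs d]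

lemma add_pow_four_le_of_abs_le {a d K : ℝ} (hd : |d| ≤ K) :
    (a + d) ^ 4 ≤ a ^ 4 + 4 * a ^ 3 * d + 8 * K ^ 2 * a ^ 2 + 3 * K ^ 4 := by
  have hd2 : d ^ 2 ≤ K ^ 2 := by nlinarith [abs_nonneg d, sq_abs d]
  have hd4 : d ^ 4 ≤ K ^ 4 := by nlinarith [sq_nonneg d]
  -- AM-GM: `4 |a| K³ ≤ 2 K² a² + 2 K⁴`
  have hcube : 4 * a * d ^ 3 ≤ 2 * K ^ 2 * a ^ 2 + 2 * K ^ 4 := by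
    have h3 : |a * d ^ 3| ≤ |a| * K ^ 3 := by
      rw [abs_mul, abs_pow]
      exact mul_le_mul_of_nonneg_left (pow_le_pow_left₀ (abs_nonneg d) hd 3) (abs_nonneg a)
    nlinarith [le_abs_self (a * d ^ 3), sq_nonneg (|a| * K - K ^ 2), sq_abs a]
  nlinarith [mul_le_mul_of_nonneg_left hd2 (sq_nonneg a)]

namespace MeasureTheory

variable {Ω : Type*} {m0 : MeasurableSpace Ω} {μ : Measure Ω}

theorem Martingale.integral_mul_sub_eq_zero [IsFiniteMeasure μ] {ι : Type*} [Preorder ι]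
    {ℱ : Filtration ι m0} {f : ι → Ω → ℝ} (hf : Martingale f ℱ μ) {i j : ι} (hij : i ≤ j)
    {g : Ω → ℝ} (hg : StronglyMeasurable[ℱ i] g)
    (hgf : Integrable (fun ω => g ω * (f j ω - f i ω)) μ) :
    ∫ ω, g ω * (f j ω - f i ω) ∂μ = 0 := by
  have hinc : μ[f j - f i | ℱ i] =ᵐ[μ] 0 := by
    filter_upwards [condExp_sub (hf.integrable j) (hf.integrable i) (ℱ i), hf.condExp_ae_eq hij,
      hf.condExp_ae_eq (le_refl i)] with ω h hj hi
    simp [h, hj, hi]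
  calc ∫ ω, g ω * (f j ω - f i ω) ∂μ
      = ∫ ω, μ[fun ω => g ω * (f j ω - f i ω) | ℱ i] ω ∂μ := (integral_condExp (ℱ.le i)).symm
    _ = ∫ ω, (g * μ[f j - f i | ℱ i]) ω ∂μ := integral_congr_ae
        (condExp_mul_of_stronglyMeasurable_left hg hgf
          ((hf.integrable j).sub (hf.integrable i)))
    _ = 0 := integral_eq_zero_of_ae (by filter_upwards [hinc] with ω h; simp [h])

lemma integral_pow_eq_zero_of_ae_eq_zero {f : Ω → ℝ} (hf : ∀ᵐ ω ∂μ, f ω = 0) {p : ℕ}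
    (hp : p ≠ 0) :
    ∫ ω, f ω ^ p ∂μ = 0 :=
  integral_eq_zero_of_ae (by filter_upwards [hf] with ω h; simp [h, hp])

variable {M : ℕ → Ω → ℝ} {K : ℝ}

lemma ae_abs_le_mul_of_abs_sub_le (hM0 : ∀ᵐ ω ∂μ, M 0 ω = 0)
    (hd : ∀ k, ∀ᵐ ω ∂μ, |M (k + 1) ω - M k ω| ≤ K) (k : ℕ) : ∀ᵐ ω ∂μ, |M k ω| ≤ K * k := by
  induction k with
  | zero => filter_upwards [hM0] with ω h; simp [h]
  | succ k ih =>
    filter_upwards [ih, hd k] with ω hk hstep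
    push_cast
    linarith [abs_sub_abs_le_abs_sub (M (k + 1) ω) (M k ω)]

lemma integrable_pow_of_abs_sub_le [IsFiniteMeasure μ] (hM0 : ∀ᵐ ω ∂μ, M 0 ω = 0)
    (hd : ∀ k, ∀ᵐ ω ∂μ, |M (k + 1) ω - M k ω| ≤ K) {k : ℕ}
    (hMk : AEStronglyMeasurable (M k) μ) (p : ℕ) : Integrable (fun ω => M k ω ^ p) μ := by
  refine .of_bound (hMk.pow p) ((K * k) ^ p) ?_
  filter_upwards [ae_abs_le_mul_of_abs_sub_le hM0 hd k] with ω h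
  rw [Real.norm_eq_abs, abs_pow]
  exact pow_le_pow_left₀ (abs_nonneg _) h p

lemma integrable_pow_mul_sub_of_abs_sub_le [IsFiniteMeasure μ] (hM0 : ∀ᵐ ω ∂μ, M 0 ω = 0)
    (hd : ∀ k, ∀ᵐ ω ∂μ, |M (k + 1) ω - M k ω| ≤ K) {k : ℕ}
    (hMk : AEStronglyMeasurable (M k) μ) (hMk' : AEStronglyMeasurable (M (k + 1)) μ) (p : ℕ) :
    Integrable (fun ω => M k ω ^ p * (M (k + 1) ω - M k ω)) μ := by
  refine .of_bound ((hMk.pow p).mul (hMk'.sub hMk)) ((K * k) ^ p * K) ?_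
  filter_upwards [ae_abs_le_mul_of_abs_sub_le hM0 hd k, hd k] with ω h hstep
  rw [Real.norm_eq_abs, abs_mul, abs_pow]
  exact mul_le_mul (pow_le_pow_left₀ (abs_nonneg _) h p) hstep (abs_nonneg _)
    (pow_nonneg ((abs_nonneg _).trans h) p)

variable [IsProbabilityMeasure μ] {ℱ : Filtration ℕ m0}

theorem Martingale.integral_sq_succ_le (hM : Martingale M ℱ μ) (hM0 : ∀ᵐ ω ∂μ, M 0 ω = 0)
    (hd : ∀ k, ∀ᵐ ω ∂μ, |M (k + 1) ω - M k ω| ≤ K) (k : ℕ) :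
    ∫ ω, M (k + 1) ω ^ 2 ∂μ ≤ ∫ ω, M k ω ^ 2 ∂μ + K ^ 2 := by
  have hmeas j := (hM.integrable j).aestronglyMeasurable
  have hsq j := integrable_pow_of_abs_sub_le hM0 hd (hmeas j) 2
  have hcross : Integrable (fun ω => M k ω * (M (k + 1) ω - M k ω)) μ := by
    simpa using integrable_pow_mul_sub_of_abs_sub_le hM0 hd (hmeas k) (hmeas (k + 1)) 1
  calc ∫ ω, M (k + 1) ω ^ 2 ∂μ
      ≤ ∫ ω, (M k ω ^ 2 + 2 * (M k ω * (M (k + 1) ω - M k ω)) + K ^ 2) ∂μ := by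
        refine integral_mono_ae (hsq _)
          (((hsq k).fun_add (hcross.const_mul 2)).fun_add (integrable_const _)) ?_
        filter_upwards [hd k] with ω h
        have := add_sq_le_of_abs_le (a := M k ω) h
        rw [add_sub_cancel] at this
        linarith
    _ = ∫ ω, M k ω ^ 2 ∂μ + 2 * ∫ ω, M k ω * (M (k + 1) ω - M k ω) ∂μ + K ^ 2 := by
        rw [integral_add ((hsq k).fun_add (hcross.const_mul 2)) (integrable_const _),
          integral_add (hsq k) (hcross.const_mul 2), integral_const_mul, integral_const]
        simp
    _ = ∫ ω, M k ω ^ 2 ∂μ + K ^ 2 := by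
        have horth : ∫ ω, M k ω * (M (k + 1) ω - M k ω) ∂μ = 0 :=
          hM.integral_mul_sub_eq_zero k.le_succ (hM.stronglyMeasurable k) hcross
        rw [horth]
        ring

theorem Martingale.integral_pow_four_succ_le (hM : Martingale M ℱ μ)
    (hM0 : ∀ᵐ ω ∂μ, M 0 ω = 0) (hd : ∀ k, ∀ᵐ ω ∂μ, |M (k + 1) ω - M k ω| ≤ K) (k : ℕ) :
    ∫ ω, M (k + 1) ω ^ 4 ∂μ
      ≤ ∫ ω, M k ω ^ 4 ∂μ + 8 * K ^ 2 * ∫ ω, M k ω ^ 2 ∂μ + 3 * K ^ 4 := by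
  have hmeas j := (hM.integrable j).aestronglyMeasurable
  have hpow j p := integrable_pow_of_abs_sub_le hM0 hd (hmeas j) p
  have hcross := integrable_pow_mul_sub_of_abs_sub_le hM0 hd (hmeas k) (hmeas (k + 1)) 3
  have hsum := (hpow k 4).fun_add (hcross.const_mul 4)
  calc ∫ ω, M (k + 1) ω ^ 4 ∂μ
      ≤ ∫ ω, (M k ω ^ 4 + 4 * (M k ω ^ 3 * (M (k + 1) ω - M k ω))
          + 8 * K ^ 2 * M k ω ^ 2 + 3 * K ^ 4) ∂μ := by
        refine integral_mono_ae (hpow _ 4)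
          ((hsum.fun_add ((hpow k 2).const_mul _)).fun_add (integrable_const _)) ?_
        filter_upwards [hd k] with ω h
        have := add_pow_four_le_of_abs_le (a := M k ω) h
        rw [add_sub_cancel] at this
        linarith
    _ = ∫ ω, M k ω ^ 4 ∂μ + 4 * ∫ ω, M k ω ^ 3 * (M (k + 1) ω - M k ω) ∂μ
          + 8 * K ^ 2 * ∫ ω, M k ω ^ 2 ∂μ + 3 * K ^ 4 := by
        rw [integral_add (hsum.fun_add ((hpow k 2).const_mul _)) (integrable_const _),
          integral_add hsum ((hpow k 2).const_mul _), integral_add (hpow k 4) (hcross.const_mul 4),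
          integral_const_mul, integral_const_mul, integral_const]
        simp
    _ = ∫ ω, M k ω ^ 4 ∂μ + 8 * K ^ 2 * ∫ ω, M k ω ^ 2 ∂μ + 3 * K ^ 4 := by
        have horth : ∫ ω, M k ω ^ 3 * (M (k + 1) ω - M k ω) ∂μ = 0 :=
          hM.integral_mul_sub_eq_zero k.le_succ ((hM.stronglyMeasurable k).pow 3) hcross
        rw [horth]
        ring

theorem Martingale.integral_sq_le (hM : Martingale M ℱ μ) (hM0 : ∀ᵐ ω ∂μ, M 0 ω = 0)
    (hd : ∀ k, ∀ᵐ ω ∂μ, |M (k + 1) ω - M k ω| ≤ K) (k : ℕ) :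
    ∫ ω, M k ω ^ 2 ∂μ ≤ K ^ 2 * k := by
  induction k with
  | zero => simp [integral_pow_eq_zero_of_ae_eq_zero hM0 two_ne_zero]
  | succ k ih =>
    push_cast
    linarith [hM.integral_sq_succ_le hM0 hd k]

theorem Martingale.integral_pow_four_le (hM : Martingale M ℱ μ) (hM0 : ∀ᵐ ω ∂μ, M 0 ω = 0)
    (hd : ∀ k, ∀ᵐ ω ∂μ, |M (k + 1) ω - M k ω| ≤ K) (k : ℕ) :
    ∫ ω, M k ω ^ 4 ∂μ ≤ 4 * K ^ 4 * k ^ 2 := by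
  induction k with
  | zero => simp [integral_pow_eq_zero_of_ae_eq_zero hM0 four_ne_zero]
  | succ k ih =>
    have h2 := mul_le_mul_of_nonneg_left (hM.integral_sq_le hM0 hd k)
      (by positivity : 0 ≤ 8 * K ^ 2)
    push_cast
    nlinarith [hM.integral_pow_four_succ_le hM0 hd k]

end MeasureTheory

theorem martingale_fourth_moment_bound_general
    {Ω : Type*} {m0 : MeasurableSpace Ω} {μ : Measure Ω} [IsProbabilityMeasure μ]
    (ℱ : Filtration ℕ m0) (M : ℕ → Ω → ℝ) (K : ℝ)
    (hM : Martingale M ℱ μ)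
    (hM0 : ∀ᵐ ω ∂μ, M 0 ω = 0)
    (hbdd : ∀ k : ℕ, 1 ≤ k → ∀ᵐ ω ∂μ, |M k ω - M (k - 1) ω| ≤ K) :
    ∀ n : ℕ, 1 ≤ n → (∫ ω, (M n ω) ^ 4 ∂μ) ≤ 7 * K ^ 4 * (n : ℝ) ^ 2 := by
  intro n _
  have hd : ∀ k, ∀ᵐ ω ∂μ, |M (k + 1) ω - M k ω| ≤ K := fun k => by
    simpa using hbdd (k + 1) k.succ_pos
  calc ∫ ω, M n ω ^ 4 ∂μ ≤ 4 * K ^ 4 * n ^ 2 := hM.integral_pow_four_le hM0 hd n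
    _ ≤ 7 * K ^ 4 * n ^ 2 := by gcongr; norm_num

/-- fourth-moment bound for bounded-increment martingales.
Let `(M k)` be a martingale with `M 0 = 0` and increments bounded by `K ≥ 0`
almost surely.  Then for every `n ≥ 1`, `E[M n ^ 4] ≤ 7 K⁴ n²`. -/
theorem martingale_fourth_moment_bound
    {Ω : Type*} {m0 : MeasurableSpace Ω} {μ : Measure Ω} [IsProbabilityMeasure μ]
    (ℱ : Filtration ℕ m0) (M : ℕ → Ω → ℝ) (K : ℝ) (hK : 0 ≤ K)
    (hM : Martingale M ℱ μ)
    (hM0 : ∀ᵐ ω ∂μ, M 0 ω = 0)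
    (hbdd : ∀ k : ℕ, 1 ≤ k → ∀ᵐ ω ∂μ, |M k ω - M (k - 1) ω| ≤ K) :
    ∀ n : ℕ, 1 ≤ n → (∫ ω, (M n ω) ^ 4 ∂μ) ≤ 7 * K ^ 4 * (n : ℝ) ^ 2 :=
  martingale_fourth_moment_bound_general ℱ M K hM hM0 hbdd
end

section
/- Let (S, 𝒮, μ) be a probability space, let V₀ > 0, let R : S × S → ℝ be measurable with 0 ≤ R ≤ V₀ everywhere, and set Ψ(y) = ∫_S R(x, y) μ(dx). Then for every δ > 0 and every integer k ≥ 1, μ^{⊗(k+1)}( { (x₁, …, x_{k+1}) : R(x_i, x_{k+1}) < δ for all 1 ≤ i ≤ k } ) ≤ exp( −k δ / (2V₀) ) + μ( { y : Ψ(y) ≤ 2δ } ). -/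
/-!
Conditioning on the last coordinate `y`, the first `k` coordinates are i.i.d., so the probability
is `∫ μ(A_y)^k dμ(y)` with `A_y = {x | R(x, y) < δ}`. Since `R < δ` on `A_y` and `R ≤ V₀`
everywhere, `Ψ(y) ≤ δ + V₀ μ(A_yᶜ)`; so if `Ψ(y) > 2δ` then `μ(A_y) ≤ 1 - δ/V₀ ≤ exp(-δ/V₀)` and
`μ(A_y)^k ≤ exp(-kδ/V₀)`. On `{Ψ ≤ 2δ}` the integrand is at most `1`.
-/

open MeasureTheory

section

variable {S : Type*} [MeasurableSpace S]

theorem measure_pi_forall_castSucc_last_mem_eq_lintegral (μ : Measure S) [SigmaFinite μ]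
    {s : Set (S × S)} (hs : MeasurableSet s) (k : ℕ) :
    (Measure.pi fun _ : Fin (k + 1) => μ) {x | ∀ i : Fin k, (x i.castSucc, x (Fin.last k)) ∈ s}
      = ∫⁻ y, μ {x | (x, y) ∈ s} ^ k ∂μ := by
  set t : Set (S × (Fin k → S)) := {p | ∀ i, (p.2 i, p.1) ∈ s}
  have ht : MeasurableSet t := by
    simp only [t, Set.ofPred_forall]
    exact .iInter fun i => hs.preimage ((measurable_pi_apply i).comp measurable_snd |>.prodMk
      measurable_fst)
  have hpre : {x : Fin (k + 1) → S | ∀ i : Fin k, (x i.castSucc, x (Fin.last k)) ∈ s}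
      = MeasurableEquiv.piFinSuccAbove (fun _ => S) (Fin.last k) ⁻¹' t := by
    ext x
    simp [t, MeasurableEquiv.piFinSuccAbove, Fin.insertNthEquiv, Fin.init]
  rw [hpre, (measurePreserving_piFinSuccAbove (fun _ => μ) (Fin.last k)).measure_preimage
    ht.nullMeasurableSet, Measure.prod_apply ht]
  refine lintegral_congr fun y => ?_
  have hslice : Prod.mk y ⁻¹' t = Set.univ.pi fun _ : Fin k => {x | (x, y) ∈ s} := by
    ext x; simp [t]
  simp [hslice, Measure.pi_pi]

theorem integral_le_add_mul_measureReal_setOf_le (ν : Measure S) [IsProbabilityMeasure ν]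
    {f : S → ℝ} (hf : Integrable f ν) (hfm : Measurable f) {V δ : ℝ} (hfV : ∀ x, f x ≤ V)
    (hδ : 0 ≤ δ) :
    ∫ x, f x ∂ν ≤ δ + V * ν.real {x | δ ≤ f x} := by
  have hmeas : MeasurableSet {x | δ ≤ f x} := measurableSet_le measurable_const hfm
  have hle : f ≤ fun x => δ + {x | δ ≤ f x}.indicator (fun _ => V) x := by
    intro x
    dsimp only
    by_cases hx : δ ≤ f x
    · rw [Set.indicator_of_mem (show x ∈ {x | δ ≤ f x} from hx)]
      linarith [hfV x]
    · rw [Set.indicator_of_notMem (show x ∉ {x | δ ≤ f x} from hx)]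
      linarith
  calc ∫ x, f x ∂ν ≤ ∫ x, (δ + {x | δ ≤ f x}.indicator (fun _ => V) x) ∂ν :=
        integral_mono hf ((integrable_const δ).add ((integrable_const V).indicator hmeas)) hle
    _ = δ + V * ν.real {x | δ ≤ f x} := by
        rw [integral_add (integrable_const δ) ((integrable_const V).indicator hmeas),
          integral_indicator_const V hmeas]
        simp [mul_comm]

theorem measure_setOf_lt_le_exp_of_lt_integral (ν : Measure S) [IsProbabilityMeasure ν]
    {f : S → ℝ} (hf : Integrable f ν) (hfm : Measurable f) {V δ : ℝ} (hV : 0 < V)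
    (hfV : ∀ x, f x ≤ V) (hδ : 0 ≤ δ) (hmean : 2 * δ < ∫ x, f x ∂ν) :
    ν {x | f x < δ} ≤ ENNReal.ofReal (Real.exp (-(δ / V))) := by
  have hlarge : δ < V * ν.real {x | δ ≤ f x} := by
    linarith [integral_le_add_mul_measureReal_setOf_le ν hf hfm hfV hδ]
  have hsmall : ν.real {x | f x < δ} ≤ 1 - δ / V := by
    have hcompl : {x | f x < δ} = {x | δ ≤ f x}ᶜ := by ext; simp
    rw [hcompl, probReal_compl_eq_one_sub (measurableSet_le measurable_const hfm)]
    have := (div_lt_iff₀' hV).mpr hlarge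
    linarith
  rw [← ofReal_measureReal]
  exact ENNReal.ofReal_le_ofReal (hsmall.trans (by linarith [Real.add_one_le_exp (-(δ / V))]))

theorem lintegral_le_add_measure_of_le_of_notMem (μ : Measure S) [IsProbabilityMeasure μ] {g : S → ENNReal}
    {B : Set S} {c : ENNReal} (hg : ∀ y, g y ≤ 1) (hgc : ∀ y ∉ B, g y ≤ c) :
    ∫⁻ y, g y ∂μ ≤ c + μ B := by
  calc ∫⁻ y, g y ∂μ ≤ ∫⁻ y, (c + B.indicator 1 y) ∂μ := by
        refine lintegral_mono fun y => ?_
        by_cases hy : y ∈ B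
        · rw [Set.indicator_of_mem hy, Pi.one_apply]
          exact (hg y).trans le_add_self
        · rw [Set.indicator_of_notMem hy, add_zero]
          exact hgc y hy
    _ ≤ c + μ B := by
        rw [lintegral_add_left measurable_const, lintegral_const, measure_univ, mul_one]
        gcongr
        simpa using lintegral_indicator_le (μ := μ) 1 B

end

theorem replica_overlap_bound_general
    {S : Type*} [MeasurableSpace S] (μ : Measure S) [IsProbabilityMeasure μ]
    (V₀ : ℝ) (hV₀ : 0 < V₀)
    (R : S × S → ℝ) (hRmeas : Measurable R)
    (hR0 : ∀ p, 0 ≤ R p) (hRV : ∀ p, R p ≤ V₀)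
    (δ : ℝ) (hδ : 0 < δ) (k : ℕ) :
    (Measure.pi fun _ : Fin (k + 1) => μ)
        {x | ∀ i : Fin k, R (x i.castSucc, x (Fin.last k)) < δ}
      ≤ ENNReal.ofReal (Real.exp (-(k * δ) / (2 * V₀)))
        + μ {y | (∫ x, R (x, y) ∂μ) ≤ 2 * δ} := by
  have hslice : ∀ y, Measurable fun x => R (x, y) := fun y => hRmeas.comp measurable_prodMk_right
  refine (measure_pi_forall_castSucc_last_mem_eq_lintegral μ (s := {p | R p < δ})
    (measurableSet_lt hRmeas measurable_const) k).trans_le ?_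
  refine lintegral_le_add_measure_of_le_of_notMem μ (fun y => pow_le_one₀ zero_le prob_le_one)
    fun y hy => ?_
  have hint : Integrable (fun x => R (x, y)) μ := .of_bound (hslice y).aestronglyMeasurable V₀
    (.of_forall fun x => by rw [Real.norm_of_nonneg (hR0 _)]; exact hRV _)
  have hexp := measure_setOf_lt_le_exp_of_lt_integral μ hint (hslice y) hV₀ (fun x => hRV _)
    hδ.le (not_le.mp hy)
  calc μ {x | R (x, y) < δ} ^ k ≤ ENNReal.ofReal (Real.exp (-(δ / V₀))) ^ k := by gcongr
    _ = ENNReal.ofReal (Real.exp (k * -(δ / V₀))) := by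
        rw [← ENNReal.ofReal_pow (Real.exp_pos _).le, Real.exp_nat_mul]
    _ ≤ ENNReal.ofReal (Real.exp (-(k * δ) / (2 * V₀))) := by
        gcongr
        rw [mul_neg, neg_div, neg_le_neg_iff, mul_div_assoc]
        gcongr
        linarith

/-- replica / Paley–Zygmund overlap estimate.  Let `(S, μ)` be a
probability space, `V₀ > 0`, and let `R : S × S → ℝ` be measurable with
`0 ≤ R ≤ V₀`.  Set `Ψ y = ∫ R(x,y) μ(dx)`.  Then for every `δ > 0` and every
integer `k ≥ 1`,
`μ^{⊗(k+1)}({x : ∀ i ≤ k, R(xᵢ, x_{k+1}) < δ}) ≤ exp(-kδ/(2V₀)) + μ({y : Ψ y ≤ 2δ})`. -/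
theorem replica_overlap_bound
    {S : Type*} [MeasurableSpace S] (μ : Measure S) [IsProbabilityMeasure μ]
    (V₀ : ℝ) (hV₀ : 0 < V₀)
    (R : S × S → ℝ) (hRmeas : Measurable R)
    (hR0 : ∀ p, 0 ≤ R p) (hRV : ∀ p, R p ≤ V₀)
    (δ : ℝ) (hδ : 0 < δ) (k : ℕ) (hk : 1 ≤ k) :
    (Measure.pi fun _ : Fin (k + 1) => μ)
        {x | ∀ i : Fin k, R (x i.castSucc, x (Fin.last k)) < δ}
      ≤ ENNReal.ofReal (Real.exp (-(k * δ) / (2 * V₀)))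
        + μ {y | (∫ x, R (x, y) ∂μ) ≤ 2 * δ} :=
  replica_overlap_bound_general μ V₀ hV₀ R hRmeas hR0 hRV δ hδ k
end
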